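/- arXiv:2604.07267 — 2 statements merged into one kernel-verified Lean document; each statement's English description precedes it below -/
import Mathlib

section
/- Let E be an m×m matrix with entries ε_{ij} ∈ [0,1], and let σ_ξ² ≥ 0, σ_f² > 0. Define ε_E := (1/m)‖E‖₁ (with ‖·‖₁ the maximum absolute column-sum norm) and ε_{E,2} := (σ_f²/(σ_ξ² + m·σ_f²))² · ‖2(σ_ξ²/σ_f²)E + E·𝟙𝟙ᵀ + 𝟙𝟙ᵀ·E − E²‖₁. If E is symmetric with nonnegative entries, then ε_{E,2} ≤ 2·ε_E. -/
open Matrix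

/-- For a symmetric matrix `E` with entries in `[0,1]`, with `ε_E = (1/m)‖E‖₁` and
`ε_{E,2} = (σ_f²/(σ_ξ² + m σ_f²))² ‖2(σ_ξ²/σ_f²)E + E𝟙𝟙ᵀ + 𝟙𝟙ᵀE − E²‖₁`
(`‖·‖₁` the maximum absolute column-sum norm), one has `ε_{E,2} ≤ 2 ε_E`. -/
theorem epsE2_le_two_epsE {m : ℕ} (hm : 0 < m)
    (E : Matrix (Fin m) (Fin m) ℝ)
    (hE0 : ∀ i j, 0 ≤ E i j) (hE1 : ∀ i j, E i j ≤ 1) (hsymm : E.IsSymm)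
    (σξ2 σf2 : ℝ) (hξ : 0 ≤ σξ2) (hf : 0 < σf2) :
    let J : Matrix (Fin m) (Fin m) ℝ := Matrix.of fun _ _ => (1 : ℝ)
    let norm1 : Matrix (Fin m) (Fin m) ℝ → ℝ := fun M =>
      Finset.univ.sup' (Finset.univ_nonempty_iff.mpr ⟨⟨0, hm⟩⟩)
        (fun j => ∑ i, |M i j|)
    let εE : ℝ := (1 / (m : ℝ)) * norm1 E
    let εE2 : ℝ := (σf2 / (σξ2 + (m : ℝ) * σf2)) ^ 2 *
      norm1 ((2 * (σξ2 / σf2)) • E + E * J + J * E - E * E)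
    εE2 ≤ 2 * εE := by
  intro J norm1 εE εE2
  have hm' : (0 : ℝ) < (m : ℝ) := by exact_mod_cast hm
  set r : ℝ := σξ2 / σf2 with hrdef
  have hr0 : 0 ≤ r := div_nonneg hξ hf.le
  have hD : (0 : ℝ) < σξ2 + (m : ℝ) * σf2 := by positivity
  set N : ℝ := norm1 E with hNdef
  -- column sums of E are ≤ N
  have hcol : ∀ j, ∑ i, E i j ≤ N := by
    intro j
    have h1 : ∑ i, |E i j| ≤ N :=
      Finset.le_sup' (fun j => ∑ i, |E i j|) (Finset.mem_univ j)
    calc ∑ i, E i j = ∑ i, |E i j| :=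
          Finset.sum_congr rfl fun i _ => (abs_of_nonneg (hE0 i j)).symm
      _ ≤ N := h1
  -- row sums of E are ≤ N (by symmetry)
  have hrow : ∀ i, ∑ k, E i k ≤ N := by
    intro i
    have : ∑ k, E i k = ∑ k, E k i :=
      Finset.sum_congr rfl fun k _ => by rw [← hsymm.apply i k]
    rw [this]; exact hcol i
  have hN0 : 0 ≤ N :=
    le_trans (Finset.sum_nonneg fun i _ => hE0 i ⟨0, hm⟩) (hcol ⟨0, hm⟩)
  -- the big matrix
  set A : Matrix (Fin m) (Fin m) ℝ :=
    (2 * (σξ2 / σf2)) • E + E * J + J * E - E * E with hAdef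
  -- entrywise formula and bound
  have hAentry : ∀ i j, A i j =
      2 * r * E i j + (∑ k, E i k) + (∑ k, E k j) - ∑ k, E i k * E k j := by
    intro i j
    simp [hAdef, Matrix.mul_apply, Matrix.add_apply, Matrix.sub_apply,
      Matrix.smul_apply, J, hrdef, smul_eq_mul]
  have habs : ∀ i j, |A i j| ≤ 2 * r * E i j + (∑ k, E i k) + (∑ k, E k j) := by
    intro i j
    have hQ0 : 0 ≤ ∑ k, E i k * E k j :=
      Finset.sum_nonneg fun k _ => mul_nonneg (hE0 i k) (hE0 k j)
    have hQle : ∑ k, E i k * E k j ≤ ∑ k, E k j := by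
      refine Finset.sum_le_sum fun k _ => ?_
      calc E i k * E k j ≤ 1 * E k j :=
            mul_le_mul_of_nonneg_right (hE1 i k) (hE0 k j)
        _ = E k j := one_mul _
    rw [hAentry i j, abs_of_nonneg]
    · linarith
    · have h1 : 0 ≤ 2 * r * E i j := mul_nonneg (by positivity) (hE0 i j)
      have h2 : 0 ≤ ∑ k, E i k := Finset.sum_nonneg fun k _ => hE0 i k
      linarith
  -- column sums of A are ≤ (2r + 2m) N
  have hAcol : ∀ j, ∑ i, |A i j| ≤ (2 * r + 2 * (m : ℝ)) * N := by
    intro j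
    have h := Finset.sum_le_sum fun i (_ : i ∈ Finset.univ) => habs i j
    have h2 : ∑ i : Fin m, (2 * r * E i j + (∑ k, E i k) + (∑ k, E k j))
        ≤ (2 * r + 2 * (m : ℝ)) * N := by
      rw [Finset.sum_add_distrib, Finset.sum_add_distrib, ← Finset.mul_sum]
      have t1 : 2 * r * (∑ i, E i j) ≤ 2 * r * N :=
        mul_le_mul_of_nonneg_left (hcol j) (by positivity)
      have t2 : ∑ i : Fin m, (∑ k, E i k) ≤ (m : ℝ) * N := by
        calc ∑ i : Fin m, (∑ k, E i k) ≤ ∑ _i : Fin m, N :=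
              Finset.sum_le_sum fun i _ => hrow i
          _ = (m : ℝ) * N := by simp [Finset.sum_const]
      have t3 : ∑ _i : Fin m, (∑ k, E k j) ≤ (m : ℝ) * N := by
        calc ∑ _i : Fin m, (∑ k, E k j) ≤ ∑ _i : Fin m, N :=
              Finset.sum_le_sum fun i _ => hcol j
          _ = (m : ℝ) * N := by simp [Finset.sum_const]
      linarith
    linarith
  have hnormA : norm1 A ≤ (2 * r + 2 * (m : ℝ)) * N :=
    Finset.sup'_le _ _ fun j _ => hAcol j
  -- prefactor algebra
  have hc : (σf2 / (σξ2 + (m : ℝ) * σf2)) ^ 2 * ((2 * r + 2 * (m : ℝ)) * N)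
      = (2 * σf2 / (σξ2 + (m : ℝ) * σf2)) * N := by
    rw [hrdef]
    field_simp
  have hfinal : (2 * σf2 / (σξ2 + (m : ℝ) * σf2)) * N ≤ (2 / (m : ℝ)) * N := by
    apply mul_le_mul_of_nonneg_right _ hN0
    rw [div_le_div_iff₀ hD hm']
    nlinarith
  have hεE2 : εE2 = (σf2 / (σξ2 + (m : ℝ) * σf2)) ^ 2 * norm1 A := rfl
  have hstep : εE2 ≤ (σf2 / (σξ2 + (m : ℝ) * σf2)) ^ 2 * ((2 * r + 2 * (m : ℝ)) * N) := by
    rw [hεE2]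
    exact mul_le_mul_of_nonneg_left hnormA (by positivity)
  have : εE2 ≤ (2 / (m : ℝ)) * N := by rw [hc] at hstep; linarith
  have h2εE : 2 * εE = (2 / (m : ℝ)) * N := by
    show 2 * ((1 / (m : ℝ)) * N) = _
    ring
  linarith [h2εE ▸ this]
end

section
/- Let K_n → K∞ = σ_ξ²·I + σ_f²·𝟙𝟙ᵀ and k_n → σ_f²·𝟙 (entrywise, with K_n invertible symmetric positive definite for all n, σ_ξ² > 0, σ_f² > 0), let f_n → f(x*)·𝟙, and let Γ = (σ_ξ² + m σ_f²)/(m σ_f²). Then Γ·(k_n)ᵀ K_n⁻¹ f_n → f(x*), i.e. the Γ-corrected GP-nearest-neighbour predictor is asymptotically unbiased in the fixed-m limit. -/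
open Matrix Filter

/-- Asymptotic unbiasedness of the Γ-corrected GPnn predictor in the fixed-`m` limit:
if `K_n → σ_ξ² I + σ_f² 𝟙𝟙ᵀ`, `k_n → σ_f² 𝟙`, `f_n → f(x*) 𝟙` entrywise, with each `K_n`
invertible symmetric positive definite, then
`Γ k_nᵀ K_n⁻¹ f_n → f(x*)` where `Γ = (σ_ξ² + m σ_f²)/(m σ_f²)`. -/
theorem gpnn_asymptotically_unbiased {m : ℕ} (hm : 0 < m)
    (σξ2 σf2 : ℝ) (hξ : 0 < σξ2) (hf : 0 < σf2)
    (Kseq : ℕ → Matrix (Fin m) (Fin m) ℝ) (kseq fseq : ℕ → Fin m → ℝ)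
    (hKpd : ∀ n, (Kseq n).PosDef)
    (hKinv : ∀ n, IsUnit (Kseq n).det)
    (hKlim : ∀ i j, Tendsto (fun n => Kseq n i j) atTop
      (nhds ((σξ2 • (1 : Matrix (Fin m) (Fin m) ℝ)
        + σf2 • (Matrix.of fun _ _ => (1 : ℝ) : Matrix (Fin m) (Fin m) ℝ)) i j)))
    (hklim : ∀ j, Tendsto (fun n => kseq n j) atTop (nhds σf2))
    (fstar : ℝ)
    (hflim : ∀ i, Tendsto (fun n => fseq n i) atTop (nhds fstar)) :
    Tendsto
      (fun n => ((σξ2 + (m : ℝ) * σf2) / ((m : ℝ) * σf2)) *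
        (kseq n ⬝ᵥ (Kseq n)⁻¹.mulVec (fseq n)))
      atTop (nhds fstar) := by
  set Kinf : Matrix (Fin m) (Fin m) ℝ :=
    σξ2 • (1 : Matrix (Fin m) (Fin m) ℝ)
      + σf2 • (Matrix.of fun _ _ => (1 : ℝ)) with hKinf_def
  set c : ℝ := σξ2 + (m : ℝ) * σf2 with hc_def
  have hc_pos : 0 < c := by
    have : 0 < (m : ℝ) := by exact_mod_cast hm
    positivity
  -- Kinf is positive definite
  have hpd : Kinf.PosDef := by
    rw [Matrix.posDef_iff_dotProduct_mulVec]
    constructor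
    · show Kinfᴴ = Kinf
      ext i j
      simp [hKinf_def, Matrix.one_apply, eq_comm]
    · intro x hx
      have hmv : Kinf.mulVec x = fun i => σξ2 * x i + σf2 * (∑ j, x j) := by
        funext i
        simp only [hKinf_def, Matrix.add_mulVec, Matrix.smul_mulVec,
          Matrix.one_mulVec, Pi.add_apply, Pi.smul_apply, smul_eq_mul]
        congr 1
        simp [Matrix.mulVec, dotProduct, Finset.mul_sum]
      have hdp : (star x) ⬝ᵥ Kinf.mulVec x
          = σξ2 * (∑ i, x i * x i) + σf2 * (∑ i, x i) ^ 2 := by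
        set S := ∑ j, x j with hS
        simp only [hmv, dotProduct, star_trivial]
        rw [show ∑ i, x i * (σξ2 * x i + σf2 * S)
            = ∑ i, (σξ2 * (x i * x i) + x i * (σf2 * S)) from
          Finset.sum_congr rfl fun i _ => by ring]
        rw [Finset.sum_add_distrib, ← Finset.mul_sum, ← Finset.sum_mul, ← hS]
        ring
      rw [hdp]
      have hne : ∃ i, x i ≠ 0 := by
        by_contra h
        push_neg at h
        exact hx (funext h)
      obtain ⟨i0, hi0⟩ := hne
      have hsum : 0 < ∑ i, x i * x i := by
        refine Finset.sum_pos' (fun i _ => mul_self_nonneg _) ⟨i0, Finset.mem_univ _, ?_⟩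
        exact mul_self_pos.mpr hi0
      have := sq_nonneg (∑ i, x i)
      nlinarith
  have hdet : Kinf.det ≠ 0 := hpd.det_pos.ne'
  -- entrywise convergence of the inverses
  have hKtend : Tendsto Kseq atTop (nhds Kinf) :=
    tendsto_pi_nhds.2 fun i => tendsto_pi_nhds.2 fun j => hKlim i j
  have hcontinv : ContinuousAt Ring.inverse Kinf.det := by
    rw [Ring.inverse_eq_inv']
    exact continuousAt_inv₀ hdet
  have hinvtend : Tendsto (fun n => (Kseq n)⁻¹) atTop (nhds Kinf⁻¹) :=
    (continuousAt_matrix_inv Kinf hcontinv).tendsto.comp hKtend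
  have hinv_entry : ∀ i j, Tendsto (fun n => (Kseq n)⁻¹ i j) atTop (nhds (Kinf⁻¹ i j)) :=
    fun i j => tendsto_pi_nhds.1 (tendsto_pi_nhds.1 hinvtend i) j
  -- convergence of the full expression
  have hmv : ∀ j, Tendsto (fun n => ((Kseq n)⁻¹.mulVec (fseq n)) j) atTop
      (nhds ((Kinf⁻¹.mulVec (fun _ => fstar)) j)) := by
    intro j
    simp only [Matrix.mulVec, dotProduct]
    exact tendsto_finset_sum _ fun i _ => (hinv_entry j i).mul (hflim i)
  have hdot : Tendsto (fun n => kseq n ⬝ᵥ (Kseq n)⁻¹.mulVec (fseq n)) atTop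
      (nhds ((fun _ => σf2) ⬝ᵥ Kinf⁻¹.mulVec (fun _ => fstar))) := by
    simp only [dotProduct]
    exact tendsto_finset_sum _ fun j _ => (hklim j).mul (hmv j)
  have hfull := (tendsto_const_nhds (x := c / ((m : ℝ) * σf2))).mul hdot
  -- compute the limit value
  have h1 : Kinf.mulVec (fun _ => fstar / c) = fun _ => fstar := by
    funext i
    have : ∑ j, Kinf i j = c := by
      simp [hKinf_def, Matrix.one_apply, Finset.sum_add_distrib, Finset.sum_ite_eq,
        hc_def, mul_comm]
    simp only [Matrix.mulVec, dotProduct, ← Finset.sum_mul, this]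
    field_simp
  have h2 : Kinf⁻¹.mulVec (fun _ => fstar) = fun _ => fstar / c := by
    conv_lhs => rw [← h1, Matrix.mulVec_mulVec, Matrix.nonsing_inv_mul _ hdet.isUnit,
      Matrix.one_mulVec]
  have hval : c / ((m : ℝ) * σf2) * ((fun _ => σf2) ⬝ᵥ Kinf⁻¹.mulVec (fun _ => fstar))
      = fstar := by
    rw [h2]
    simp only [dotProduct, Finset.sum_const, Finset.card_univ, Fintype.card_fin,
      nsmul_eq_mul]
    have hm' : (m : ℝ) ≠ 0 := by positivity
    field_simp
  rw [hval] at hfull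
  exact hfull
end
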